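/- arXiv:2212.00094 — 4 statements merged into one kernel-verified Lean document; each statement's English description precedes it below -/
import Mathlib

section
/- Let X be a finite set of cardinality n, let π and π̃ be probability distributions on X with ‖π̃ − π‖_TV ≤ p/(8n) for some p ∈ {1, …, n}, and let L ⊆ X be the random set obtained by drawing 120·p independent samples from π̃ (and removing duplicates). Then Pr(π(L) ≥ p/(8n)) ≥ 9/10. -/
/-!
Since `‖π̃ − π‖_TV ≤ p/(8n)`, it suffices that `π̃(L) ≥ q := p/(4n)` with probability `9/10`.
The points of `π̃`-weight at least `1/(2n)` carry mass at least `1/2`, and each of them is missed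
by all `m = 120p` samples with probability at most `exp(-60p/n)`. If `n ≤ 15p` this is at most
`e⁻⁴`, and Markov's inequality for the missed mass suffices. Otherwise either the points of weight
at least `q` have mass at least `1/4`, and all samples avoid them with probability at most
`(3/4)^120`, or the points of weight in `[1/(2n), q)` have mass at least `1/4`. In the latter case
their sampled mass has mean `μ ≥ 12q` and, the events `x ∈ L` being negatively correlated,
variance at most `qμ`, so Chebyshev's inequality applies.
-/

open Finset

theorem one_sub_pow_le_exp_neg_mul {a b : ℝ} (hba : b ≤ a) (ha : a ≤ 1) (m : ℕ) :
    (1 - a) ^ m ≤ Real.exp (-(m * b)) := by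
  rw [neg_mul_eq_mul_neg, Real.exp_nat_mul]
  exact pow_le_pow_left₀ (sub_nonneg.2 ha)
    ((Real.one_sub_le_exp_neg a).trans (Real.exp_le_exp.2 (neg_le_neg hba))) m

theorem exp_neg_le_one_sub_div_five {s : ℝ} (hs0 : 0 ≤ s) (hs4 : s ≤ 4) :
    Real.exp (-s) ≤ 1 - s / 5 := by
  have hquad := Real.quadratic_le_exp_of_nonneg hs0
  rw [Real.exp_neg, inv_le_iff_one_le_mul₀ (Real.exp_pos s)]
  nlinarith [mul_nonneg hs0 (sub_nonneg.2 hs4)]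

theorem exp_neg_four_le : Real.exp (-4) ≤ 1 / 20 := by
  have h : Real.exp (-4) = Real.exp (-1) ^ 4 := by rw [← Real.exp_nat_mul]; norm_num
  rw [h]
  calc Real.exp (-1) ^ 4 ≤ 0.3678794412 ^ 4 :=
        pow_le_pow_left₀ (Real.exp_pos _).le Real.exp_neg_one_lt_d9.le 4
    _ ≤ 1 / 20 := by norm_num

theorem sum_le_sum_add_half_sum_abs_sub {ι : Type*} [Fintype ι] [DecidableEq ι] {u v : ι → ℝ}
    (h : ∑ i, u i = ∑ i, v i) (A : Finset ι) :
    ∑ i ∈ A, u i ≤ ∑ i ∈ A, v i + 1 / 2 * ∑ i, |u i - v i| := by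
  have hzero : ∑ i ∈ A, (u i - v i) + ∑ i ∈ Aᶜ, (u i - v i) = 0 := by
    rw [sum_add_sum_compl, sum_sub_distrib, h, sub_self]
  have hA : ∑ i ∈ A, (u i - v i) ≤ ∑ i ∈ A, |u i - v i| := sum_le_sum fun i _ => le_abs_self _
  have hAc : -∑ i ∈ Aᶜ, (u i - v i) ≤ ∑ i ∈ Aᶜ, |u i - v i| := by
    rw [← sum_neg_distrib]; exact sum_le_sum fun i _ => neg_le_abs _
  have habs := sum_add_sum_compl A fun i => |u i - v i|
  rw [sum_sub_distrib] at hA hzero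
  linarith

theorem sum_compl_eq_one_sub {ι : Type*} [Fintype ι] [DecidableEq ι] {w : ι → ℝ}
    (hw1 : ∑ i, w i = 1) (A : Finset ι) : ∑ i ∈ Aᶜ, w i = 1 - ∑ i ∈ A, w i := by
  rw [← hw1, ← sum_compl_add_sum A]; ring

theorem half_le_sum_filter_le {X : Type*} [Fintype X] {w : X → ℝ} (hw1 : ∑ x, w x = 1)
    {n : ℕ} (hcard : Fintype.card X = n) (hn : 0 < n) :
    1 / 2 ≤ ∑ x ∈ univ.filter (1 / (2 * n) ≤ w ·), w x := by
  have hlight : ∑ x ∈ univ.filter (¬ 1 / (2 * n) ≤ w ·), w x ≤ n * (1 / (2 * n)) := by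
    calc _ ≤ #(univ.filter (¬ 1 / (2 * n) ≤ w ·)) • (1 / (2 * n) : ℝ) :=
          sum_le_card_nsmul _ _ _ fun x hx => (not_le.1 (mem_filter.1 hx).2).le
      _ ≤ n * (1 / (2 * n)) := by
          rw [nsmul_eq_mul]
          gcongr
          exact_mod_cast (card_filter_le _ _).trans_eq (card_univ.trans hcard)
  have hsplit := sum_filter_add_sum_filter_not univ (1 / (2 * n) ≤ w ·) w
  have : (n : ℝ) * (1 / (2 * n)) = 1 / 2 := by field_simp
  linarith

section Sampling

variable {X : Type*} {m : ℕ}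

def hitInd [DecidableEq X] (f : Fin m → X) (x : X) : ℝ := if x ∈ image f univ then 1 else 0

theorem prod_one_sub_hitInd [DecidableEq X] (f : Fin m → X) (A : Finset X) :
    ∏ x ∈ A, (1 - hitInd f x) = if ∀ i, f i ∉ A then 1 else 0 := by
  have h : ∀ x, 1 - hitInd f x = if x ∉ image f univ then 1 else 0 := fun x => by
    unfold hitInd; split_ifs <;> simp_all
  simp only [h, prod_boole, mem_image, mem_univ, true_and, not_exists]
  congr 1
  exact propext ⟨fun H i hi => H _ hi i rfl, fun H x hx i hi => H i (hi ▸ hx)⟩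

theorem sum_mul_hitInd_le_sum_image [DecidableEq X] {w : X → ℝ} (hw : ∀ x, 0 ≤ w x)
    (S : Finset X) (f : Fin m → X) :
    ∑ x ∈ S, w x * hitInd f x ≤ ∑ x ∈ image f univ, w x := by
  simp only [hitInd, mul_boole, sum_ite_mem]
  exact sum_le_sum_of_subset_of_nonneg inter_subset_right fun x _ _ => hw x

variable [Fintype X]

noncomputable def iidExpect (w : X → ℝ) (m : ℕ) (g : (Fin m → X) → ℝ) : ℝ :=
  ∑ f, (∏ i, w (f i)) * g f

variable {w : X → ℝ}

theorem iidExpect_add (g h : (Fin m → X) → ℝ) :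
    iidExpect w m (fun f => g f + h f) = iidExpect w m g + iidExpect w m h := by
  simp only [iidExpect, mul_add, sum_add_distrib]

theorem iidExpect_sub (g h : (Fin m → X) → ℝ) :
    iidExpect w m (fun f => g f - h f) = iidExpect w m g - iidExpect w m h := by
  simp only [iidExpect, mul_sub, sum_sub_distrib]

theorem iidExpect_const_mul (c : ℝ) (g : (Fin m → X) → ℝ) :
    iidExpect w m (fun f => c * g f) = c * iidExpect w m g := by
  simp only [iidExpect, mul_sum]; exact sum_congr rfl fun _ _ => by ring

theorem iidExpect_sum {ι : Type*} (s : Finset ι) (g : ι → (Fin m → X) → ℝ) :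
    iidExpect w m (fun f => ∑ j ∈ s, g j f) = ∑ j ∈ s, iidExpect w m (g j) := by
  simp only [iidExpect, mul_sum]; exact sum_comm

theorem iidExpect_const (hw1 : ∑ x, w x = 1) (c : ℝ) : iidExpect w m (fun _ => c) = c := by
  rw [iidExpect, ← sum_mul, ← Fintype.prod_sum, hw1, prod_const_one, one_mul]

theorem iidExpect_mono (hw : ∀ x, 0 ≤ w x) {g h : (Fin m → X) → ℝ} (hgh : ∀ f, g f ≤ h f) :
    iidExpect w m g ≤ iidExpect w m h :=
  sum_le_sum fun f _ => mul_le_mul_of_nonneg_left (hgh f) (prod_nonneg fun i _ => hw (f i))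

theorem iidExpect_indicator_le_div (hw : ∀ x, 0 ≤ w x) {E : (Fin m → X) → Prop}
    [DecidablePred E] {g : (Fin m → X) → ℝ} {c : ℝ} (hc : 0 < c) (hg : ∀ f, 0 ≤ g f)
    (hE : ∀ f, E f → c ≤ g f) :
    iidExpect w m (fun f => if E f then 1 else 0) ≤ iidExpect w m g / c := by
  rw [div_eq_inv_mul, ← iidExpect_const_mul]
  refine iidExpect_mono hw fun f => ?_
  split_ifs with h
  · rw [inv_mul_eq_div, one_le_div hc]; exact hE f h
  · exact mul_nonneg (inv_nonneg.2 hc.le) (hg f)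

variable [DecidableEq X]

theorem iidExpect_prod_one_sub_hitInd (A : Finset X) :
    iidExpect w m (fun f => ∏ x ∈ A, (1 - hitInd f x)) = (∑ x ∈ Aᶜ, w x) ^ m := by
  have h : ∀ f : Fin m → X, (∏ i, w (f i)) * (if ∀ i, f i ∉ A then 1 else 0)
      = ∏ i, if f i ∉ A then w (f i) else 0 := fun f => by
    rw [mul_boole, prod_ite_zero]; simp
  simp only [iidExpect, prod_one_sub_hitInd, h]
  rw [← Fintype.prod_sum fun _ x => if x ∉ A then w x else 0, prod_const, card_univ,
    Fintype.card_fin, ← sum_filter]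
  congr 2; ext x; simp

theorem iidExpect_hitInd (hw1 : ∑ x, w x = 1) (x : X) :
    iidExpect w m (hitInd · x) = 1 - (1 - w x) ^ m := by
  have := iidExpect_prod_one_sub_hitInd (w := w) (m := m) {x}
  rw [sum_compl_eq_one_sub hw1, sum_singleton] at this
  simp only [prod_singleton, iidExpect_sub, iidExpect_const hw1] at this
  linarith

theorem iidExpect_hitInd_mul_hitInd_le (hw : ∀ x, 0 ≤ w x) (hw1 : ∑ x, w x = 1) (x y : X) :
    iidExpect w m (fun f => hitInd f x * hitInd f y)
      ≤ (1 - (1 - w x) ^ m) * (1 - (1 - w y) ^ m) + if x = y then 1 - (1 - w x) ^ m else 0 := by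
  obtain rfl | hxy := eq_or_ne x y
  · have hsq : ∀ f : Fin m → X, hitInd f x * hitInd f x = hitInd f x := fun f => by
      unfold hitInd; split_ifs <;> norm_num
    simp only [hsq, iidExpect_hitInd hw1, if_true]
    nlinarith [mul_self_nonneg (1 - (1 - w x) ^ m)]
  -- inclusion–exclusion turns the joint hit into the probability of missing both points
  have hsplit : ∀ f : Fin m → X, hitInd f x * hitInd f y
      = 1 - (1 - hitInd f x) - (1 - hitInd f y) + ∏ z ∈ {x, y}, (1 - hitInd f z) := fun f => by
    rw [prod_pair hxy]; ring
  have hpair := iidExpect_prod_one_sub_hitInd (w := w) (m := m) {x, y}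
  rw [sum_compl_eq_one_sub hw1, sum_pair hxy] at hpair
  simp only [hsplit, iidExpect_add, iidExpect_sub, iidExpect_const hw1, hpair, iidExpect_hitInd hw1,
    if_neg hxy, add_zero]
  have hxy1 : w x + w y ≤ 1 := by
    rw [← hw1, ← sum_pair hxy]; exact sum_le_univ_sum_of_nonneg hw
  have hmiss : (1 - (w x + w y)) ^ m ≤ (1 - w x) ^ m * (1 - w y) ^ m := by
    rw [← mul_pow]
    exact pow_le_pow_left₀ (by linarith) (by nlinarith [mul_nonneg (hw x) (hw y)]) m
  nlinarith

theorem iidExpect_sq_sub_le (hw : ∀ x, 0 ≤ w x) (hw1 : ∑ x, w x = 1) (S : Finset X)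
    {c : X → ℝ} (hc : ∀ x, 0 ≤ c x) :
    iidExpect w m (fun f => (∑ x ∈ S, c x * hitInd f x - ∑ x ∈ S, c x * (1 - (1 - w x) ^ m)) ^ 2)
      ≤ ∑ x ∈ S, c x ^ 2 * (1 - (1 - w x) ^ m) := by
  set e : X → ℝ := fun x => 1 - (1 - w x) ^ m
  set μ := ∑ x ∈ S, c x * e x
  have hmean : iidExpect w m (fun f => ∑ x ∈ S, c x * hitInd f x) = μ := by
    simp only [iidExpect_sum, iidExpect_const_mul, iidExpect_hitInd hw1, μ, e]
  have hsecond : iidExpect w m (fun f => (∑ x ∈ S, c x * hitInd f x) ^ 2)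
      ≤ μ ^ 2 + ∑ x ∈ S, c x ^ 2 * e x := calc
    _ = ∑ x ∈ S, ∑ y ∈ S, c x * c y * iidExpect w m (fun f => hitInd f x * hitInd f y) := by
      simp only [sq, sum_mul_sum, iidExpect_sum, ← iidExpect_const_mul]
      exact sum_congr rfl fun x _ => sum_congr rfl fun y _ => by congr 1; ext f; ring
    _ ≤ ∑ x ∈ S, ∑ y ∈ S, c x * c y * (e x * e y + if x = y then e x else 0) :=
      sum_le_sum fun x _ => sum_le_sum fun y _ => mul_le_mul_of_nonneg_left
        (iidExpect_hitInd_mul_hitInd_le hw hw1 x y) (mul_nonneg (hc x) (hc y))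
    _ = μ ^ 2 + ∑ x ∈ S, c x ^ 2 * e x := by
      simp only [mul_add, sum_add_distrib, mul_ite, mul_zero, sum_ite_eq, sq, μ,
        sum_mul_sum]
      congr 1
      · exact sum_congr rfl fun x _ => sum_congr rfl fun y _ => by ring
      · exact sum_congr rfl fun x hx => by simp [hx]
  have hexp : ∀ f : Fin m → X, (∑ x ∈ S, c x * hitInd f x - μ) ^ 2
      = (∑ x ∈ S, c x * hitInd f x) ^ 2 - 2 * μ * ∑ x ∈ S, c x * hitInd f x + μ ^ 2 :=
    fun f => by ring
  simp only [hexp, iidExpect_add, iidExpect_sub, iidExpect_const_mul, hmean, iidExpect_const hw1]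
  linarith

theorem iidExpect_mass_lt_le_div (hw : ∀ x, 0 ≤ w x) (hw1 : ∑ x, w x = 1) (T : Finset X)
    {q : ℝ} (hq : q < ∑ x ∈ T, w x) :
    iidExpect w m (fun f => if ∑ x ∈ image f univ, w x < q then 1 else 0)
      ≤ (∑ x ∈ T, w x * (1 - w x) ^ m) / (∑ x ∈ T, w x - q) := by
  have hmissed : iidExpect w m (fun f => ∑ x ∈ T, w x * (1 - hitInd f x))
      = ∑ x ∈ T, w x * (1 - w x) ^ m := by
    simp only [iidExpect_sum, iidExpect_const_mul, iidExpect_sub, iidExpect_const hw1,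
      iidExpect_hitInd hw1, sub_sub_cancel]
  rw [← hmissed]
  refine iidExpect_indicator_le_div hw (sub_pos.2 hq)
    (fun f => sum_nonneg fun x _ => mul_nonneg (hw x) ?_) fun f hf => ?_
  · unfold hitInd; split_ifs <;> norm_num
  · have := sum_mul_hitInd_le_sum_image hw T f
    simp only [mul_sub, mul_one, sum_sub_distrib]
    linarith

theorem iidExpect_mass_lt_le_one_sub_pow (hw : ∀ x, 0 ≤ w x) (hw1 : ∑ x, w x = 1) (q : ℝ) :
    iidExpect w m (fun f => if ∑ x ∈ image f univ, w x < q then 1 else 0)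
      ≤ (1 - ∑ x ∈ univ.filter (q ≤ w ·), w x) ^ m := by
  rw [← sum_compl_eq_one_sub hw1, ← iidExpect_prod_one_sub_hitInd]
  refine iidExpect_mono hw fun f => ?_
  rw [prod_one_sub_hitInd]
  by_cases hlt : ∑ x ∈ image f univ, w x < q
  · have hmiss : ∀ i, f i ∉ univ.filter (q ≤ w ·) := fun i hi =>
      ((mem_filter.1 hi).2.trans (single_le_sum (fun x _ => hw x)
        (mem_image_of_mem f (mem_univ i)))).not_gt hlt
    simp only [hlt, hmiss, if_true, not_false_eq_true, implies_true, le_refl]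
  · rw [if_neg hlt]; split_ifs <;> norm_num

theorem iidExpect_mass_lt_le_mul_div_sq (hw : ∀ x, 0 ≤ w x) (hw1 : ∑ x, w x = 1)
    (S : Finset X) {q : ℝ} (hS : ∀ x ∈ S, w x ≤ q)
    (hq : q < ∑ x ∈ S, w x * (1 - (1 - w x) ^ m)) :
    iidExpect w m (fun f => if ∑ x ∈ image f univ, w x < q then 1 else 0)
      ≤ q * (∑ x ∈ S, w x * (1 - (1 - w x) ^ m))
        / (∑ x ∈ S, w x * (1 - (1 - w x) ^ m) - q) ^ 2 := by
  set μ := ∑ x ∈ S, w x * (1 - (1 - w x) ^ m)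
  have hvar : ∑ x ∈ S, w x ^ 2 * (1 - (1 - w x) ^ m) ≤ q * μ := by
    rw [mul_sum]
    refine sum_le_sum fun x hx => ?_
    have : 0 ≤ 1 - (1 - w x) ^ m := sub_nonneg.2 (pow_le_one₀ ?_ ?_)
    · nlinarith [mul_nonneg (sub_nonneg.2 (hS x hx)) (mul_nonneg (hw x) this)]
    all_goals linarith [hw x, single_le_sum (fun y _ => hw y) (mem_univ x) |>.trans_eq hw1]
  refine (iidExpect_indicator_le_div hw (pow_pos (sub_pos.2 hq) 2) (fun f => sq_nonneg _)
    fun f hf => ?_).trans (div_le_div_of_nonneg_right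
      ((iidExpect_sq_sub_le hw hw1 S hw).trans hvar) (sq_nonneg _))
  have := sum_mul_hitInd_le_sum_image hw S f
  nlinarith

theorem iidExpect_mass_lt_le_of_miss_le (hw : ∀ x, 0 ≤ w x) (hw1 : ∑ x, w x = 1)
    (T : Finset X) (hT : 1 / 2 ≤ ∑ x ∈ T, w x) {q : ℝ} (hq : q ≤ 1 / 4)
    (hmiss : ∀ x ∈ T, (1 - w x) ^ m ≤ 1 / 20) :
    iidExpect w m (fun f => if ∑ x ∈ image f univ, w x < q then 1 else 0) ≤ 1 / 10 := by
  refine (iidExpect_mass_lt_le_div hw hw1 T (by linarith)).trans ?_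
  have hsum : ∑ x ∈ T, w x * (1 - w x) ^ m ≤ (∑ x ∈ T, w x) * (1 / 20) := by
    rw [sum_mul]
    exact sum_le_sum fun x hx => mul_le_mul_of_nonneg_left (hmiss x hx) (hw x)
  rw [div_le_iff₀ (by linarith)]
  linarith

theorem iidExpect_mass_lt_le_of_heavy (hw : ∀ x, 0 ≤ w x) (hw1 : ∑ x, w x = 1)
    (hm : 120 ≤ m) {q : ℝ} (hheavy : 1 / 4 ≤ ∑ x ∈ univ.filter (q ≤ w ·), w x) :
    iidExpect w m (fun f => if ∑ x ∈ image f univ, w x < q then 1 else 0) ≤ 1 / 10 := by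
  have hle : ∑ x ∈ univ.filter (q ≤ w ·), w x ≤ 1 := hw1 ▸ sum_le_univ_sum_of_nonneg hw
  calc _ ≤ (1 - ∑ x ∈ univ.filter (q ≤ w ·), w x) ^ m := iidExpect_mass_lt_le_one_sub_pow hw hw1 q
    _ ≤ (3 / 4) ^ m := pow_le_pow_left₀ (by linarith) (by linarith) m
    _ ≤ (3 / 4) ^ 120 := pow_le_pow_of_le_one (by norm_num) (by norm_num) hm
    _ ≤ 1 / 10 := by norm_num

theorem iidExpect_mass_lt_le_of_light (hw : ∀ x, 0 ≤ w x) (hw1 : ∑ x, w x = 1)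
    (T : Finset X) (hT : 1 / 2 ≤ ∑ x ∈ T, w x) {q : ℝ} (hq : 0 < q)
    (hlight : ∑ x ∈ univ.filter (q ≤ w ·), w x < 1 / 4)
    (hhit : ∀ x ∈ T, 48 * q ≤ 1 - (1 - w x) ^ m) :
    iidExpect w m (fun f => if ∑ x ∈ image f univ, w x < q then 1 else 0) ≤ 1 / 10 := by
  set S := T.filter (¬ q ≤ w ·)
  have hS : 1 / 4 ≤ ∑ x ∈ S, w x := by
    have hsplit := sum_filter_add_sum_filter_not T (q ≤ w ·) w
    have hTH : ∑ x ∈ T.filter (q ≤ w ·), w x ≤ ∑ x ∈ univ.filter (q ≤ w ·), w x :=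
      sum_le_sum_of_subset_of_nonneg (filter_subset_filter _ (subset_univ T)) fun x _ _ => hw x
    linarith
  have hμ : 12 * q ≤ ∑ x ∈ S, w x * (1 - (1 - w x) ^ m) := calc
    12 * q ≤ (∑ x ∈ S, w x) * (48 * q) := by nlinarith
    _ ≤ ∑ x ∈ S, w x * (1 - (1 - w x) ^ m) := by
      rw [sum_mul]
      exact sum_le_sum fun x hx =>
        mul_le_mul_of_nonneg_left (hhit x (mem_filter.1 hx).1) (hw x)
  refine (iidExpect_mass_lt_le_mul_div_sq hw hw1 S
    (fun x hx => (not_le.1 (mem_filter.1 hx).2).le) (by linarith)).trans ?_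
  rw [div_le_iff₀ (pow_pos (by linarith) 2)]
  nlinarith

theorem iidExpect_mass_lt_le_one_div_ten (hw : ∀ x, 0 ≤ w x) (hw1 : ∑ x, w x = 1) {n p : ℕ}
    (hcard : Fintype.card X = n) (hp1 : 1 ≤ p) (hpn : p ≤ n) :
    iidExpect w (120 * p)
      (fun f => if ∑ x ∈ image f univ, w x < p / (4 * n) then 1 else 0) ≤ 1 / 10 := by
  have hn : 0 < n := by omega
  have hnR : (0 : ℝ) < n := by exact_mod_cast hn
  have hpR : (1 : ℝ) ≤ p := by exact_mod_cast hp1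
  have hpnR : (p : ℝ) ≤ n := by exact_mod_cast hpn
  set T := univ.filter (1 / (2 * n) ≤ w ·)
  have hT := half_le_sum_filter_le hw1 hcard hn
  have hmissT : ∀ x ∈ T, (1 - w x) ^ (120 * p) ≤ Real.exp (-(60 * p / n)) := fun x hx => by
    refine (one_sub_pow_le_exp_neg_mul (mem_filter.1 hx).2
      (hw1 ▸ single_le_sum (fun y _ => hw y) (mem_univ x)) _).trans_eq ?_
    congr 2
    push_cast
    field_simp
    ring
  rcases le_or_gt (n : ℝ) (15 * p) with hdense | hsparse
  · refine iidExpect_mass_lt_le_of_miss_le hw hw1 T hT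
      (by rw [div_le_iff₀ (by positivity)]; linarith)
      fun x hx => (hmissT x hx).trans ((Real.exp_le_exp.2 ?_).trans exp_neg_four_le)
    rw [neg_le_neg_iff, le_div_iff₀ hnR]
    linarith
  by_cases hheavy : 1 / 4 ≤ ∑ x ∈ univ.filter ((p / (4 * n) : ℝ) ≤ w ·), w x
  · exact iidExpect_mass_lt_le_of_heavy hw hw1 (by omega) hheavy
  refine iidExpect_mass_lt_le_of_light hw hw1 T hT (by positivity) (not_le.1 hheavy)
    fun x hx => ?_
  have hexp := exp_neg_le_one_sub_div_five (s := 60 * p / n) (by positivity)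
    (by rw [div_le_iff₀ hnR]; linarith)
  have : 48 * ((p : ℝ) / (4 * n)) = 60 * p / n / 5 := by field_simp; ring
  linarith [hmissT x hx]

end Sampling

open Finset in
open scoped Classical in
theorem stmt2_general {X : Type*} [Fintype X] [DecidableEq X] (n : ℕ) (hcard : Fintype.card X = n)
    (π πt : X → ℝ) (hπsum : ∑ x, π x = 1)
    (hπt : ∀ x, 0 ≤ πt x) (hπtsum : ∑ x, πt x = 1)
    (p : ℕ) (hp1 : 1 ≤ p) (hpn : p ≤ n)
    (hTV : (1 / 2) * ∑ u, |πt u - π u| ≤ (p : ℝ) / (8 * n)) :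
    (9 : ℝ) / 10 ≤
      ∑ f : Fin (120 * p) → X,
        (if (p : ℝ) / (8 * n) ≤ ∑ u ∈ Finset.image f Finset.univ, π u
          then ∏ i, πt (f i) else 0) := by
  have hbad := iidExpect_mass_lt_le_one_div_ten hπt hπtsum hcard hp1 hpn
  have hgood : ∀ f : Fin (120 * p) → X,
      1 - (if ∑ x ∈ image f univ, πt x < p / (4 * n) then 1 else 0)
        ≤ if (p : ℝ) / (8 * n) ≤ ∑ u ∈ image f univ, π u then (1 : ℝ) else 0 := fun f => by
    have hshift := sum_le_sum_add_half_sum_abs_sub (hπtsum.trans hπsum.symm) (image f univ)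
    have hhalf : (p : ℝ) / (4 * n) = 2 * (p / (8 * n)) := by ring
    split_ifs <;> linarith
  calc (9 : ℝ) / 10 ≤ 1 - iidExpect πt (120 * p)
        (fun f => if ∑ x ∈ image f univ, πt x < p / (4 * n) then 1 else 0) := by linarith
    _ = iidExpect πt (120 * p)
        (fun f => 1 - if ∑ x ∈ image f univ, πt x < p / (4 * n) then 1 else 0) := by
      rw [iidExpect_sub, iidExpect_const hπtsum]
    _ ≤ _ := iidExpect_mono hπt hgood
    _ = _ := by simp only [iidExpect, mul_boole]

open Finset in
open scoped Classical in
/-- Proposition 4.4 / `prp:M_measure`, with `c = 120`.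
Let `X` be a finite set of cardinality `n`, let `π` and `π̃` be probability distributions
on `X` with `‖π̃ − π‖_TV ≤ p/(8n)` for some `p ∈ {1, …, n}`, and let `L ⊆ X` be the random
set obtained by drawing `120·p` independent samples from `π̃` (removing duplicates).
Then `Pr(π(L) ≥ p/(8n)) ≥ 9/10`.  The probability is written out explicitly as a sum,
over all tuples of samples, of the product of their `π̃`-probabilities. -/
theorem stmt2 {X : Type*} [Fintype X] [DecidableEq X] (n : ℕ) (hcard : Fintype.card X = n)
    (π πt : X → ℝ) (hπ : ∀ x, 0 ≤ π x) (hπsum : ∑ x, π x = 1)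
    (hπt : ∀ x, 0 ≤ πt x) (hπtsum : ∑ x, πt x = 1)
    (p : ℕ) (hp1 : 1 ≤ p) (hpn : p ≤ n)
    (hTV : (1 / 2) * ∑ u, |πt u - π u| ≤ (p : ℝ) / (8 * n)) :
    (9 : ℝ) / 10 ≤
      ∑ f : Fin (120 * p) → X,
        (if (p : ℝ) / (8 * n) ≤ ∑ u ∈ Finset.image f Finset.univ, π u
          then ∏ i, πt (f i) else 0) :=
  stmt2_general n hcard π πt hπsum hπt hπtsum p hp1 hpn hTV
end

section
/- Let G = (X, E) be an unweighted simple graph in which every vertex has positive degree, and let G' = (X', E', W) be its Metropolis-Hastings graph with transition matrix P'. Then for every edge {u,v} ∈ E, the two-step transition probability from x_u to x_v satisfies (P'²)_{x_u, x_v} = (1/d_u) · (1/d_v)/(1/d_u + 1/d_v) = (1/d_u) · 1/(1 + d_v/d_u). In other words, two steps of the walk on G' from x_u correspond to sampling a uniformly random neighbour v of u and accepting it with probability 1/(1 + d_v/d_u). -/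
/-- The weight matrix of the Metropolis--Hastings graph `G' = (X', E', W)` of a simple
graph `G = (X,E)`: the vertex set `X'` consists of a vertex `x_u` for every `u ∈ X`
(encoded `Sum.inl u`) and a vertex `x_{u,v}` for every edge `{u,v} ∈ E` (encoded
`Sum.inr e` with `e ∈ G.edgeSet`); the edges `{x_u, x_{u,v}}` for `u ∈ {u,v} ∈ E` carry
weight `1/d_u`, and all other pairs have weight `0`. -/
noncomputable def mhW {X : Type*} [Fintype X] [DecidableEq X] (G : SimpleGraph X)
    [DecidableRel G.Adj] : (X ⊕ G.edgeSet) → (X ⊕ G.edgeSet) → ℝ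
  | Sum.inl u, Sum.inr e => if u ∈ (e : Sym2 X) then ((G.degree u : ℝ))⁻¹ else 0
  | Sum.inr e, Sum.inl u => if u ∈ (e : Sym2 X) then ((G.degree u : ℝ))⁻¹ else 0
  | _, _ => 0

/-- The transition matrix `P'` of the Metropolis--Hastings walk: `P'_{x,y} = W_{x,y}/w_x`
where `w_x = ∑_y W_{x,y}` is the weighted degree. -/
noncomputable def mhP {X : Type*} [Fintype X] [DecidableEq X] (G : SimpleGraph X)
    [DecidableRel G.Adj] (x y : X ⊕ G.edgeSet) : ℝ :=
  mhW G x y / ∑ z, mhW G x z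

section aux
variable {X : Type*} [Fintype X] [DecidableEq X] (G : SimpleGraph X) [DecidableRel G.Adj]

lemma mhW_rowsum_inl (hdeg : ∀ u, 0 < G.degree u) (u : X) :
    ∑ z, mhW G (Sum.inl u) z = 1 := by
  rw [Fintype.sum_sum_type]
  have h1 : ∑ a : X, mhW G (Sum.inl u) (Sum.inl a) = 0 := by simp [mhW]
  have h2 : ∑ e : G.edgeSet, mhW G (Sum.inl u) (Sum.inr e)
      = ∑ e : G.edgeSet, (if u ∈ (e : Sym2 X) then ((G.degree u : ℝ))⁻¹ else 0) := rfl
  rw [h1, h2, Finset.sum_set_coe (f := fun e => if u ∈ e then ((G.degree u : ℝ))⁻¹ else 0),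
    ← Finset.sum_filter]
  have h3 : {e ∈ G.edgeSet.toFinset | u ∈ e} = G.incidenceFinset u :=
    (G.incidenceFinset_eq_filter u).symm
  rw [h3, Finset.sum_const, SimpleGraph.card_incidenceFinset_eq_degree, nsmul_eq_mul,
    mul_inv_cancel₀ (by exact_mod_cast (hdeg u).ne' : (G.degree u : ℝ) ≠ 0), zero_add]

lemma mhW_rowsum_inr (e : G.edgeSet) (a b : X) (hab : G.Adj a b)
    (he : (e : Sym2 X) = s(a, b)) :
    ∑ z, mhW G (Sum.inr e) z = (G.degree a : ℝ)⁻¹ + (G.degree b : ℝ)⁻¹ := by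
  rw [Fintype.sum_sum_type]
  have h2 : ∑ f : G.edgeSet, mhW G (Sum.inr e) (Sum.inr f) = 0 := by simp [mhW]
  have h1 : ∑ w : X, mhW G (Sum.inr e) (Sum.inl w)
      = ∑ w : X, ((if w = a then (G.degree a : ℝ)⁻¹ else 0)
          + (if w = b then (G.degree b : ℝ)⁻¹ else 0)) := by
    apply Finset.sum_congr rfl
    intro w _
    show (if w ∈ (e : Sym2 X) then ((G.degree w : ℝ))⁻¹ else 0) = _
    rw [he]
    by_cases h1 : w = a
    · subst h1; simp [Sym2.mem_iff, hab.ne]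
    · by_cases h2 : w = b
      · subst h2; simp [Sym2.mem_iff, h1]
      · simp [Sym2.mem_iff, h1, h2]
  rw [h1, h2, Finset.sum_add_distrib, Finset.sum_ite_eq' Finset.univ,
    Finset.sum_ite_eq' Finset.univ]
  simp

end aux

/-- For an unweighted simple graph `G` with all degrees positive, its
Metropolis--Hastings graph `G'` with transition matrix `P'`, and every edge `{u,v} ∈ E`,
the two-step transition probability from `x_u` to `x_v` satisfies
`(P'²)_{x_u,x_v} = (1/d_u) · (1/d_v)/(1/d_u + 1/d_v) = (1/d_u) · 1/(1 + d_v/d_u)`. -/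
theorem stmt11 {X : Type*} [Fintype X] [DecidableEq X] (G : SimpleGraph X)
    [DecidableRel G.Adj] (hdeg : ∀ u, 0 < G.degree u)
    (u v : X) (huv : G.Adj u v) :
    ∑ z, mhP G (Sum.inl u) z * mhP G z (Sum.inl v)
        = (G.degree u : ℝ)⁻¹ *
          ((G.degree v : ℝ)⁻¹ / ((G.degree u : ℝ)⁻¹ + (G.degree v : ℝ)⁻¹)) ∧
    ∑ z, mhP G (Sum.inl u) z * mhP G z (Sum.inl v)
        = (G.degree u : ℝ)⁻¹ * (1 + (G.degree v : ℝ) / (G.degree u : ℝ))⁻¹ := by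
  have hdu : (0 : ℝ) < (G.degree u : ℝ) := by exact_mod_cast hdeg u
  have hdv : (0 : ℝ) < (G.degree v : ℝ) := by exact_mod_cast hdeg v
  set e₀ : G.edgeSet := ⟨s(u, v), G.mem_edgeSet.mpr huv⟩ with he₀
  have key : ∑ z, mhP G (Sum.inl u) z * mhP G z (Sum.inl v)
      = (G.degree u : ℝ)⁻¹ *
        ((G.degree v : ℝ)⁻¹ / ((G.degree u : ℝ)⁻¹ + (G.degree v : ℝ)⁻¹)) := by
    rw [Fintype.sum_sum_type]
    have h1 : ∑ a : X, mhP G (Sum.inl u) (Sum.inl a) * mhP G (Sum.inl a) (Sum.inl v) = 0 := by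
      simp [mhP, mhW]
    rw [h1, zero_add, Finset.sum_eq_single e₀]
    · have hu : u ∈ (e₀ : Sym2 X) := by rw [he₀]; simp
      have hv : v ∈ (e₀ : Sym2 X) := by rw [he₀]; simp
      rw [mhP, mhP, mhW_rowsum_inl G hdeg u, mhW_rowsum_inr G e₀ u v huv rfl]
      show ((if u ∈ (e₀ : Sym2 X) then ((G.degree u : ℝ))⁻¹ else 0) / 1) *
          ((if v ∈ (e₀ : Sym2 X) then ((G.degree v : ℝ))⁻¹ else 0) / _) = _
      rw [if_pos hu, if_pos hv, div_one]
    · intro e _ hne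
      have h : u ∉ (e : Sym2 X) ∨ v ∉ (e : Sym2 X) := by
        by_contra h; push_neg at h
        exact hne (Subtype.ext (((Sym2.mem_and_mem_iff huv.ne).1 ⟨h.1, h.2⟩).trans rfl))
      rcases h with h | h
      · have : mhP G (Sum.inl u) (Sum.inr e) = 0 := by simp [mhP, mhW, h]
        rw [this, zero_mul]
      · have : mhP G (Sum.inr e) (Sum.inl v) = 0 := by simp [mhP, mhW, h]
        rw [this, mul_zero]
    · intro h; exact absurd (Finset.mem_univ _) h
  refine ⟨key, ?_⟩
  rw [key]
  field_simp
  ring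
end

section
/- Let X be a finite set of cardinality n, let π̃ be a probability distribution on X, and let x_1, x_2, … be independent samples from π̃. For T ≥ 0, let L_T = {x_1, …, x_T} (with L_0 = ∅), and call the T-th sample a success if π̃(L_{T−1}) ≥ 1/2 or π̃(L_T) ≥ π̃(L_{T−1}) + 1/(4n). Then for every T ≥ 1, conditioned on any outcome of the first T−1 samples, the T-th sample is a success with probability at least 1/4. -/
/-!
If `π̃(L) ≥ 1/2` every sample is a success. Otherwise a failing sample `b` either already lies
in `L` or has `π̃(b) < 1/(4n)`, so the failures carry mass less than `π̃(L) + n · 1/(4n) < 3/4`.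
-/

open Finset

lemma sum_filter_lt_le_card_mul {X : Type*} [Fintype X] {π : X → ℝ} {ε : ℝ} (hε : 0 ≤ ε) :
    ∑ b ∈ univ.filter (fun b => π b < ε), π b ≤ Fintype.card X * ε :=
  calc ∑ b ∈ univ.filter (fun b => π b < ε), π b
      ≤ #(univ.filter fun b => π b < ε) • ε :=
        sum_le_card_nsmul _ _ _ fun b hb => (mem_filter.mp hb).2.le
    _ ≤ Fintype.card X * ε := by
      rw [nsmul_eq_mul]
      gcongr
      exact_mod_cast card_le_univ _

lemma sum_union_le_sum_add_sum {X : Type*} [DecidableEq X] {π : X → ℝ}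
    (hπ : ∀ x, 0 ≤ π x) (s t : Finset X) :
    ∑ b ∈ s ∪ t, π b ≤ ∑ b ∈ s, π b + ∑ b ∈ t, π b := by
  rw [← sum_union_inter]
  exact le_add_of_nonneg_right (sum_nonneg fun b _ => hπ b)

lemma mem_or_lt_of_sum_insert_lt {X : Type*} [DecidableEq X] {π : X → ℝ}
    (L : Finset X) {ε : ℝ} {b : X} (hb : ∑ a ∈ insert b L, π a < ∑ a ∈ L, π a + ε) :
    b ∈ L ∨ π b < ε := by
  by_cases hbL : b ∈ L
  · exact Or.inl hbL
  · rw [sum_insert hbL] at hb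
    exact Or.inr (by linarith)

theorem le_sum_filter_success {X : Type*} [Fintype X] [DecidableEq X] {π : X → ℝ}
    (hπ : ∀ x, 0 ≤ π x) (hsum : ∑ x, π x = 1) (L : Finset X) {ε : ℝ} (hε : 0 ≤ ε) :
    1 / 2 - Fintype.card X * ε ≤
      ∑ b ∈ univ.filter (fun b =>
          1 / 2 ≤ ∑ a ∈ L, π a ∨ ∑ a ∈ L, π a + ε ≤ ∑ a ∈ insert b L, π a), π b := by
  set success := fun b => 1 / 2 ≤ ∑ a ∈ L, π a ∨ ∑ a ∈ L, π a + ε ≤ ∑ a ∈ insert b L, π a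
  by_cases hL : 1 / 2 ≤ ∑ a ∈ L, π a
  · rw [filter_true_of_mem fun b _ => Or.inl hL, hsum]
    linarith [mul_nonneg (Nat.cast_nonneg (α := ℝ) (Fintype.card X)) hε]
  have hfail : univ.filter (fun b => ¬ success b) ⊆ L ∪ univ.filter (fun b => π b < ε) := by
    intro b hb
    simp only [success, mem_filter, mem_univ, true_and, not_or, not_le] at hb
    simpa using mem_or_lt_of_sum_insert_lt L hb.2
  have hfail_mass : ∑ b ∈ univ.filter (fun b => ¬ success b), π b
      ≤ ∑ a ∈ L, π a + Fintype.card X * ε :=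
    calc _ ≤ ∑ b ∈ L ∪ univ.filter (fun b => π b < ε), π b :=
          sum_le_sum_of_subset_of_nonneg hfail fun b _ _ => hπ b
      _ ≤ _ := (sum_union_le_sum_add_sum hπ _ _).trans
          (add_le_add_right (sum_filter_lt_le_card_mul hε) _)
  have hsplit := sum_filter_add_sum_filter_not univ success π
  rw [hsum] at hsplit
  linarith

open Finset in
open scoped Classical in
theorem stmt14_general {X : Type*} [Fintype X] [DecidableEq X] (n : ℕ) (hcard : Fintype.card X = n)
    (πt : X → ℝ) (hπt : ∀ x, 0 ≤ πt x) (hsum : ∑ x, πt x = 1)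
    (T : ℕ) (xs : Fin (T - 1) → X) :
    (1 : ℝ) / 4 ≤
      ∑ b ∈ Finset.univ.filter (fun b =>
          (1 : ℝ) / 2 ≤ ∑ a ∈ Finset.image xs Finset.univ, πt a ∨
          (∑ a ∈ Finset.image xs Finset.univ, πt a) + 1 / (4 * n)
            ≤ ∑ a ∈ insert b (Finset.image xs Finset.univ), πt a),
        πt b := by
  have hcard_mul : (Fintype.card X : ℝ) * (1 / (4 * n)) ≤ 1 / 4 := by
    rw [hcard]
    rcases n.eq_zero_or_pos with rfl | hn
    · norm_num
    · exact le_of_eq (by field_simp)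
  have hsuccess :=
    le_sum_filter_success hπt hsum (image xs univ) (ε := 1 / (4 * n)) (by positivity)
  linarith

open Finset in
open scoped Classical in
/-- Let `X` be a finite set of cardinality `n`, `π̃` a probability
distribution on `X`, and draw independent samples `x₁, x₂, …` from `π̃`.  With
`L_T = {x₁, …, x_T}`, call the `T`-th sample a *success* if `π̃(L_{T−1}) ≥ 1/2` or
`π̃(L_T) ≥ π̃(L_{T−1}) + 1/(4n)`.  Then for every `T ≥ 1`, conditioned on any outcome
`xs` of the first `T−1` samples, the `T`-th sample is a success with probability at
least `1/4`.  (By independence, the conditional distribution of the `T`-th sample is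
again `π̃`, so the conditional probability is the `π̃`-mass of the successful `b`'s.) -/
theorem stmt14 {X : Type*} [Fintype X] [DecidableEq X] (n : ℕ) (hcard : Fintype.card X = n)
    (πt : X → ℝ) (hπt : ∀ x, 0 ≤ πt x) (hsum : ∑ x, πt x = 1)
    (T : ℕ) (hT : 1 ≤ T) (xs : Fin (T - 1) → X) :
    (1 : ℝ) / 4 ≤
      ∑ b ∈ Finset.univ.filter (fun b =>
          (1 : ℝ) / 2 ≤ ∑ a ∈ Finset.image xs Finset.univ, πt a ∨
          (∑ a ∈ Finset.image xs Finset.univ, πt a) + 1 / (4 * n)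
            ≤ ∑ a ∈ insert b (Finset.image xs Finset.univ), πt a),
        πt b :=
  stmt14_general n hcard πt hπt hsum T xs
end

section
/- Let X be a finite set of cardinality n, let π̃ be a probability distribution on X, and let p ∈ {1,…,n}. Let x_1, x_2, … be elements of X and, for T ≥ 0, let L_T = {x_1,…,x_T} (with L_0 = ∅). Call index T a success if π̃(L_{T−1}) ≥ 1/2 or π̃(L_T) ≥ π̃(L_{T−1}) + 1/(4n), and suppose that among the indices 1, 2, …, T* there are at least p successes. Then π̃(L_{T*}) ≥ min{1/2, p/(4n)} = p/(4n). -/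
open Finset

open scoped Classical in
/-- Once `s` reaches `c` it stays there; until then every counted step adds `δ`. -/
theorem Monotone.le_or_card_mul_le {s : ℕ → ℝ} (hs : Monotone s) (h0 : 0 ≤ s 0) (c δ : ℝ) (T : ℕ) :
    c ≤ s T ∨
      ((Icc 1 T).filter (fun t => c ≤ s (t - 1) ∨ s (t - 1) + δ ≤ s t)).card * δ ≤ s T := by
  induction T with
  | zero => simp [h0]
  | succ T ih =>
    have hsucc : s T ≤ s (T + 1) := hs T.le_succ
    rw [← insert_Icc_right_eq_Icc_add_one (by omega), filter_insert, Nat.add_sub_cancel]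
    split_ifs with hstep
    · rw [card_insert_of_notMem (by simp)]
      rcases hstep with hc | hδ
      · exact Or.inl (hc.trans hsucc)
      · refine ih.imp (fun h => h.trans hsucc) fun h => ?_
        push_cast
        linarith
    · exact ih.imp (fun h => h.trans hsucc) fun h => h.trans hsucc

open Finset in
open scoped Classical in
theorem stmt15_general {X : Type*} [DecidableEq X] (n : ℕ)
    (πt : X → ℝ) (hπt : ∀ x, 0 ≤ πt x)
    (p : ℕ) (hpn : p ≤ n)
    (x : ℕ → X) (L : ℕ → Finset X) (hL : ∀ T, L T = Finset.image x (Finset.Icc 1 T))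
    (Tstar : ℕ)
    (hsucc : p ≤ ((Finset.Icc 1 Tstar).filter (fun T =>
        (1 : ℝ) / 2 ≤ ∑ a ∈ L (T - 1), πt a ∨
        (∑ a ∈ L (T - 1), πt a) + 1 / (4 * n) ≤ ∑ a ∈ L T, πt a)).card) :
    min ((1 : ℝ) / 2) ((p : ℝ) / (4 * n)) = (p : ℝ) / (4 * n) ∧
      (p : ℝ) / (4 * n) ≤ ∑ a ∈ L Tstar, πt a := by
  have hpn' : (p : ℝ) ≤ n := by exact_mod_cast hpn
  have hhalf : (p : ℝ) / (4 * n) ≤ 1 / 2 :=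
    div_le_of_le_mul₀ (by positivity) (by norm_num) (by linarith [n.cast_nonneg (α := ℝ)])
  refine ⟨min_eq_right hhalf, ?_⟩
  have hmono : Monotone fun T => ∑ a ∈ L T, πt a := monotone_nat_of_le_succ fun T =>
    sum_le_sum_of_subset_of_nonneg (by rw [hL, hL]; gcongr; omega) fun a _ _ => hπt a
  rcases hmono.le_or_card_mul_le (sum_nonneg fun a _ => hπt a) (1 / 2) (1 / (4 * n)) Tstar
    with hreached | hcount
  · exact hhalf.trans hreached
  · calc (p : ℝ) / (4 * n) = p * (1 / (4 * n)) := by ring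
      _ ≤ _ := mul_le_mul_of_nonneg_right (by exact_mod_cast hsucc) (by positivity)
      _ ≤ _ := hcount

open Finset in
open scoped Classical in
/-- Let `X` be a finite set of cardinality `n`, `π̃` a probability
distribution on `X`, and `p ∈ {1,…,n}`.  Let `x₁, x₂, …` be elements of `X` and for
`T ≥ 0` set `L_T = {x₁, …, x_T}` (so `L_0 = ∅`).  Call an index `T` a *success* if
`π̃(L_{T−1}) ≥ 1/2` or `π̃(L_T) ≥ π̃(L_{T−1}) + 1/(4n)`, and suppose that among the
indices `1, …, T*` there are at least `p` successes.  Then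
`π̃(L_{T*}) ≥ min{1/2, p/(4n)} = p/(4n)`. -/
theorem stmt15 {X : Type*} [Fintype X] [DecidableEq X] (n : ℕ) (hcard : Fintype.card X = n)
    (πt : X → ℝ) (hπt : ∀ x, 0 ≤ πt x) (hsum : ∑ x, πt x = 1)
    (p : ℕ) (hp1 : 1 ≤ p) (hpn : p ≤ n)
    (x : ℕ → X) (L : ℕ → Finset X) (hL : ∀ T, L T = Finset.image x (Finset.Icc 1 T))
    (Tstar : ℕ)
    (hsucc : p ≤ ((Finset.Icc 1 Tstar).filter (fun T =>
        (1 : ℝ) / 2 ≤ ∑ a ∈ L (T - 1), πt a ∨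
        (∑ a ∈ L (T - 1), πt a) + 1 / (4 * n) ≤ ∑ a ∈ L T, πt a)).card) :
    min ((1 : ℝ) / 2) ((p : ℝ) / (4 * n)) = (p : ℝ) / (4 * n) ∧
      (p : ℝ) / (4 * n) ≤ ∑ a ∈ L Tstar, πt a :=
  stmt15_general n πt hπt p hpn x L hL Tstar hsucc
end
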